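/- arXiv:1811.04065 — 8 statements merged into one kernel-verified Lean document; each statement's English description precedes it below -/
import Mathlib

section
/- Let n ≥ 1, let p be a probability vector on Fin n, and let m > 0 be a real number. If each letter i receives an independent Poisson(m · p i) number K i of extra split copies, then the expected squared ℓ2 norm of the split distribution is at most 1/m; concretely, ∑_{i : Fin n} (p i)² · ( ∑_{k=0}^∞ (Real.exp (−(m · p i)) · (m · p i)^k / k!) · (k+1)⁻¹ ) ≤ 1 / m. -/
lemma poisson_inv_succ_eq (l : ℝ) (hl : 0 < l) :
    (∑' k : ℕ, (Real.exp (-l) * l ^ k / (Nat.factorial k : ℝ)) * ((k : ℝ) + 1)⁻¹)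
      = (1 - Real.exp (-l)) / l := by
  have hterm : ∀ k : ℕ, (Real.exp (-l) * l ^ k / (Nat.factorial k : ℝ)) * ((k : ℝ) + 1)⁻¹
      = (Real.exp (-l) / l) * (l ^ (k + 1) / (Nat.factorial (k + 1) : ℝ)) := by
    intro k
    have h1 : (Nat.factorial (k + 1) : ℝ) = ((k : ℝ) + 1) * (Nat.factorial k : ℝ) := by
      rw [Nat.factorial_succ]; push_cast; ring
    have hk : (Nat.factorial k : ℝ) ≠ 0 := Nat.cast_ne_zero.mpr (Nat.factorial_ne_zero k)
    have hk1 : ((k : ℝ) + 1) ≠ 0 := by positivity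
    rw [h1]
    field_simp
    ring
  rw [tsum_congr hterm, tsum_mul_left]
  have hsum : Summable (fun k : ℕ => l ^ k / (Nat.factorial k : ℝ)) :=
    Real.summable_pow_div_factorial l
  have hexp : (∑' k : ℕ, l ^ k / (Nat.factorial k : ℝ)) = Real.exp l := by
    rw [Real.exp_eq_exp_ℝ, NormedSpace.exp_eq_tsum_div]
  have hshift : (∑' k : ℕ, l ^ (k + 1) / (Nat.factorial (k + 1) : ℝ)) = Real.exp l - 1 := by
    have := Summable.tsum_eq_zero_add hsum
    rw [hexp] at this
    simp only [pow_zero, Nat.factorial_zero, Nat.cast_one, div_one] at this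
    linarith
  rw [hshift]
  rw [div_mul_eq_mul_div, mul_sub, mul_one, ← Real.exp_add]
  simp

/-- If each letter `i` receives an independent `Poisson (m * p i)` number of extra split
copies, the expected squared ℓ2 norm of the split distribution is at most `1 / m`:
`∑ i, (p i)² * E[1 / (K i + 1)] ≤ 1 / m`, where `K i ~ Poisson (m * p i)`. -/
theorem expected_split_l2_le (n : ℕ) (hn : 1 ≤ n) (p : Fin n → ℝ)
    (hp0 : ∀ i, 0 ≤ p i) (hp1 : ∑ i, p i = 1) (m : ℝ) (hm : 0 < m) :
    ∑ i : Fin n, (p i) ^ 2 *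
      (∑' k : ℕ, (Real.exp (-(m * p i)) * (m * p i) ^ k / (Nat.factorial k : ℝ)) *
        ((k : ℝ) + 1)⁻¹) ≤ 1 / m := by
  have hle : ∀ i : Fin n, (p i) ^ 2 *
      (∑' k : ℕ, (Real.exp (-(m * p i)) * (m * p i) ^ k / (Nat.factorial k : ℝ)) *
        ((k : ℝ) + 1)⁻¹) ≤ p i / m := by
    intro i
    rcases eq_or_lt_of_le (hp0 i) with h0 | h0
    · rw [← h0]
      simp
    · have hl : 0 < m * p i := mul_pos hm h0
      rw [poisson_inv_succ_eq (m * p i) hl]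
      calc (p i) ^ 2 * ((1 - Real.exp (-(m * p i))) / (m * p i))
          ≤ (p i) ^ 2 * (1 / (m * p i)) := by
            gcongr
            have := Real.exp_pos (-(m * p i))
            linarith
        _ = p i / m := by field_simp
  calc ∑ i : Fin n, (p i) ^ 2 *
      (∑' k : ℕ, (Real.exp (-(m * p i)) * (m * p i) ^ k / (Nat.factorial k : ℝ)) *
        ((k : ℝ) + 1)⁻¹) ≤ ∑ i : Fin n, p i / m := Finset.sum_le_sum fun i _ => hle i
    _ = 1 / m := by rw [← Finset.sum_div, hp1]
end

section
/- There exists an absolute constant C > 0 with the following property. For every natural number n ≥ 2, every probability vector p on Fin n, and all natural numbers 1 ≤ t₁ ≤ t₂: under the product measure μ_p^{t₁} ⊗ μ_p^{t₂} on pairs (ω, ω′) ∈ (Fin t₁ → Fin n) × (Fin t₂ → Fin n), the probability that for every i ∈ Fin n the occurrence counts X i = card {s | ω s = i} and Y i = card {s | ω′ s = i} satisfy (X i : ℝ) ≤ C · Real.log n · max 1 ((t₁ / t₂) · Y i) is at least 9/10. -/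
open MeasureTheory

/-- The PMF on `Fin n` induced by a probability vector `p : Fin n → ℝ`. -/
noncomputable def pmfOfVec {n : ℕ} (p : Fin n → ℝ) (hp0 : ∀ i, 0 ≤ p i)
    (hp1 : ∑ i, p i = 1) : PMF (Fin n) :=
  PMF.ofFintype (fun i => ENNReal.ofReal (p i))
    (by
      rw [← ENNReal.ofReal_sum_of_nonneg (fun i _ => hp0 i), hp1, ENNReal.ofReal_one])

/-!
The number `X` of occurrences of a letter `a` in `t` i.i.d. samples is binomial with parameters
`t` and `q = κ {a}`. Its generating function is
`E[z ^ X] = (1 + (z - 1) q) ^ t ≤ exp ((z - 1) t q)`, so Markov's inequality applied to `z ^ X`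
with `z = e` and `z = e⁻¹` gives the Chernoff bounds
`P(X ≥ k) ≤ exp (2 t q - k)` and `P(X ≤ m) ≤ exp (m - 5 t q / 8)`.

Put `L = log n`. If `t₁ q ≤ 16 L`, then `X < 8 max (t₁ q) L ≤ 128 L` except with probability
`n⁻⁶`. Otherwise, except with probability `2 n⁻⁶`, both `X < 8 t₁ q` and `Y > t₂ q / 4`, whence
`X < 32 (t₁ / t₂) Y`. A union bound over the `n` letters loses at most `2 n⁻⁵ ≤ 1 / 10`.
-/

open Real Finset

section Occurrences

variable {α ι : Type*} [DecidableEq α] [Fintype ι] (a : α)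

lemma pow_card_filter_eq_prod (z : ℝ) (ω : ι → α) :
    z ^ #{s | ω s = a} = ∏ s, if ω s = a then z else 1 := by
  rw [prod_ite, prod_const_one, mul_one, prod_const]

lemma ite_eq_one_add_indicator (z : ℝ) :
    (fun x => if x = a then z else 1)
      = fun x => 1 + ({a} : Set α).indicator (fun _ => z - 1) x := by
  ext x
  by_cases hx : x = a <;> simp [hx]

variable [MeasurableSpace α] [MeasurableSingletonClass α] (κ : Measure α)
  [IsProbabilityMeasure κ]

lemma integral_pow_card_filter (z : ℝ) :
    ∫ ω, z ^ #{s | ω s = a} ∂Measure.pi (fun _ : ι => κ)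
      = (1 + (z - 1) * κ.real {a}) ^ Fintype.card ι := by
  simp_rw [pow_card_filter_eq_prod]
  rw [integral_fintype_prod_eq_pow (fun x => if x = a then z else 1), ite_eq_one_add_indicator,
    integral_add (integrable_const _)
      ((integrable_const _).indicator (measurableSet_singleton a)),
    integral_const, integral_indicator_const _ (measurableSet_singleton a)]
  simp [mul_comm]

lemma integrable_pow_card_filter (z : ℝ) :
    Integrable (fun ω => z ^ #{s | ω s = a}) (Measure.pi fun _ : ι => κ) := by
  simp_rw [pow_card_filter_eq_prod]
  refine Integrable.fintype_prod (f := fun _ x => if x = a then z else 1) fun _ => ?_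
  rw [ite_eq_one_add_indicator]
  exact (integrable_const _).add ((integrable_const _).indicator (measurableSet_singleton a))

lemma measureReal_pow_le_pow_card_filter_le {z : ℝ} (hz : 0 < z) (k : ℕ) :
    (Measure.pi fun _ : ι => κ).real {ω | z ^ k ≤ z ^ #{s | ω s = a}}
      ≤ exp ((z - 1) * (Fintype.card ι * κ.real {a})) / z ^ k := by
  have hmarkov := mul_meas_ge_le_integral_of_nonneg
    (Filter.Eventually.of_forall fun ω => pow_nonneg hz.le _)
    (integrable_pow_card_filter (ι := ι) a κ z) (z ^ k)
  have hq : κ.real {a} ≤ 1 := measureReal_le_one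
  have hq₀ : 0 ≤ κ.real {a} := measureReal_nonneg
  have hpgf : (1 + (z - 1) * κ.real {a}) ^ Fintype.card ι
      ≤ exp ((z - 1) * (Fintype.card ι * κ.real {a})) := by
    calc _ ≤ exp ((z - 1) * κ.real {a}) ^ Fintype.card ι :=
          pow_le_pow_left₀ (by nlinarith) (by linarith [add_one_le_exp ((z - 1) * κ.real {a})]) _
      _ = _ := by rw [← exp_nat_mul]; ring_nf
  rw [integral_pow_card_filter] at hmarkov
  rw [le_div_iff₀ (pow_pos hz k), mul_comm]
  linarith

lemma measureReal_le_card_filter_le (k : ℕ) :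
    (Measure.pi fun _ : ι => κ).real {ω | k ≤ #{s | ω s = a}}
      ≤ exp (2 * (Fintype.card ι * κ.real {a}) - k) := by
  have hx : 0 ≤ Fintype.card ι * κ.real {a} := by positivity
  calc _ ≤ (Measure.pi fun _ : ι => κ).real {ω | exp 1 ^ k ≤ exp 1 ^ #{s | ω s = a}} :=
        measureReal_mono fun ω hω => pow_le_pow_right₀ (one_le_exp zero_le_one) hω
    _ ≤ exp ((exp 1 - 1) * (Fintype.card ι * κ.real {a})) / exp 1 ^ k :=
        measureReal_pow_le_pow_card_filter_le a κ (exp_pos 1) k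
    _ ≤ exp (2 * (Fintype.card ι * κ.real {a}) - k) := by
        rw [← exp_nat_mul, mul_one, ← exp_sub]
        gcongr
        linarith [exp_one_lt_d9]

lemma measureReal_card_filter_le_le (m : ℕ) :
    (Measure.pi fun _ : ι => κ).real {ω | #{s | ω s = a} ≤ m}
      ≤ exp (m - 5 / 8 * (Fintype.card ι * κ.real {a})) := by
  have hx : 0 ≤ Fintype.card ι * κ.real {a} := by positivity
  have he : exp (-1) ≤ 3 / 8 := by
    rw [exp_neg, inv_le_comm₀ (exp_pos 1) (by norm_num)]
    linarith [exp_one_gt_d9]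
  calc _ ≤ (Measure.pi fun _ : ι => κ).real {ω | exp (-1) ^ m ≤ exp (-1) ^ #{s | ω s = a}} :=
        measureReal_mono fun ω hω =>
          pow_le_pow_of_le_one (exp_pos _).le (exp_le_one_iff.2 (by norm_num)) hω
    _ ≤ exp ((exp (-1) - 1) * (Fintype.card ι * κ.real {a})) / exp (-1) ^ m :=
        measureReal_pow_le_pow_card_filter_le a κ (exp_pos _) m
    _ ≤ exp (m - 5 / 8 * (Fintype.card ι * κ.real {a})) := by
        rw [← exp_nat_mul, ← exp_sub, exp_le_exp]
        nlinarith

lemma measureReal_ceil_le_card_filter_le (L : ℝ) :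
    (Measure.pi fun _ : ι => κ).real
      {ω | ⌈8 * max (Fintype.card ι * κ.real {a}) L⌉₊ ≤ #{s | ω s = a}} ≤ exp (-6 * L) := by
  refine (measureReal_le_card_filter_le a κ _).trans (exp_le_exp.2 ?_)
  have := Nat.le_ceil (8 * max (Fintype.card ι * κ.real {a}) L)
  have := le_max_left (Fintype.card ι * κ.real {a}) L
  have := le_max_right (Fintype.card ι * κ.real {a}) L
  linarith

lemma measureReal_card_filter_le_floor_le {L : ℝ}
    (hL : 16 * L ≤ Fintype.card ι * κ.real {a}) :
    (Measure.pi fun _ : ι => κ).real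
      {ω | #{s | ω s = a} ≤ ⌊Fintype.card ι * κ.real {a} / 4⌋₊} ≤ exp (-6 * L) := by
  have hx : 0 ≤ Fintype.card ι * κ.real {a} := by positivity
  refine (measureReal_card_filter_le_le a κ _).trans (exp_le_exp.2 ?_)
  have := Nat.floor_le (div_nonneg hx zero_le_four)
  linarith

end Occurrences

lemma lt_mul_max_of_lt_max {L x X : ℝ} (hL : 0 ≤ L) (hx : x ≤ 16 * L) (hX : X < 8 * max x L)
    (r : ℝ) : X < 128 * L * max 1 r := by
  have : max x L ≤ 16 * L := max_le hx (by linarith)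
  have : 128 * L ≤ 128 * L * max 1 r := le_mul_of_one_le_right (by linarith) (le_max_left _ _)
  linarith

lemma lt_mul_max_of_lt_of_lt {L t₁ t₂ q X Y : ℝ} (hL : 1 / 4 ≤ L) (ht₁ : 0 < t₁)
    (ht : t₁ ≤ t₂) (hX : X < 8 * (t₁ * q)) (hY : t₂ * q / 4 < Y) :
    X < 128 * L * max 1 (t₁ / t₂ * Y) := by
  have hratio : t₁ * q / 4 < t₁ / t₂ * Y := by
    rw [div_mul_eq_mul_div, lt_div_iff₀ (ht₁.trans_le ht)]
    nlinarith
  have := le_max_left 1 (t₁ / t₂ * Y)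
  have := le_max_right 1 (t₁ / t₂ * Y)
  nlinarith

section TwoSamples

variable {α ι₁ ι₂ : Type*} [DecidableEq α] [Fintype ι₁] [Fintype ι₂] [MeasurableSpace α]
  [MeasurableSingletonClass α] (κ : Measure α) [IsProbabilityMeasure κ] (a : α)

lemma measureReal_card_filter_gt_ratio_le {L : ℝ} (hL : 1 / 4 ≤ L)
    (ht : Fintype.card ι₁ ≤ Fintype.card ι₂) :
    ((Measure.pi fun _ : ι₁ => κ).prod (Measure.pi fun _ : ι₂ => κ)).real
      {ω | 128 * L * max 1 ((Fintype.card ι₁ / Fintype.card ι₂ : ℝ) * #{s | ω.2 s = a})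
        < #{s | ω.1 s = a}} ≤ 2 * exp (-6 * L) := by
  have ht' : (Fintype.card ι₁ : ℝ) ≤ Fintype.card ι₂ := Nat.cast_le.2 ht
  set t₁ : ℝ := (Fintype.card ι₁ : ℝ)
  set t₂ : ℝ := (Fintype.card ι₂ : ℝ)
  set q := κ.real {a}
  have hq : 0 ≤ q := measureReal_nonneg
  set A := {ω : ι₁ → α | ⌈8 * max (t₁ * q) L⌉₊ ≤ #{s | ω s = a}}
  set B := {ω : ι₂ → α | #{s | ω s = a} ≤ ⌊t₂ * q / 4⌋₊}
  have hA : (Measure.pi fun _ : ι₁ => κ).real A ≤ exp (-6 * L) :=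
    measureReal_ceil_le_card_filter_le a κ L
  have hX : ∀ ω ∉ A, (#{s | ω s = a} : ℝ) < 8 * max (t₁ * q) L :=
    fun ω h => Nat.lt_ceil.1 (not_le.1 h)
  rcases le_or_gt (t₁ * q) (16 * L) with hx | hx
  · calc _ ≤ ((Measure.pi fun _ : ι₁ => κ).prod (Measure.pi fun _ : ι₂ => κ)).real
            (A ×ˢ Set.univ) := by
          refine measureReal_mono fun ω hω => ⟨by_contra fun hω₁ => ?_, trivial⟩
          exact (lt_mul_max_of_lt_max (by linarith) hx (hX ω.1 hω₁) _).not_gt hω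
      _ ≤ _ := by
          simp only [measureReal_prod_prod, probReal_univ, mul_one]
          linarith [exp_pos (-6 * L)]
  · have hB : (Measure.pi fun _ : ι₂ => κ).real B ≤ exp (-6 * L) :=
      measureReal_card_filter_le_floor_le a κ (show 16 * L ≤ t₂ * q by nlinarith)
    calc _ ≤ ((Measure.pi fun _ : ι₁ => κ).prod (Measure.pi fun _ : ι₂ => κ)).real
            (A ×ˢ Set.univ ∪ Set.univ ×ˢ B) := by
          refine measureReal_mono fun ω hω => ?_
          simp only [Set.mem_union, Set.mem_prod, Set.mem_univ, and_true, true_and]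
          by_contra! hω'
          refine (lt_mul_max_of_lt_of_lt (q := q) hL ?_ ht' ?_ ?_).not_gt hω
          · exact pos_of_mul_pos_right (by linarith) hq
          · rw [← max_eq_left (by linarith : L ≤ t₁ * q)]
            exact hX ω.1 hω'.1
          · exact (Nat.floor_lt (by positivity)).1 (not_le.1 hω'.2)
      _ ≤ _ := by
          refine (measureReal_union_le _ _).trans ?_
          simp only [measureReal_prod_prod, probReal_univ, mul_one, one_mul]
          linarith

end TwoSamples

lemma ofReal_one_sub_card_mul_le_measure_forall {Ω ι : Type*} [MeasurableSpace Ω] [Fintype ι]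
    {μ : Measure Ω} [IsProbabilityMeasure μ] {P : ι → Ω → Prop}
    (hP : MeasurableSet {ω | ∀ i, P i ω}) {ε : ℝ} (hε : ∀ i, μ.real {ω | ¬ P i ω} ≤ ε) :
    ENNReal.ofReal (1 - Fintype.card ι * ε) ≤ μ {ω | ∀ i, P i ω} := by
  have hcompl : {ω | ∀ i, P i ω}ᶜ = ⋃ i, {ω | ¬ P i ω} := by
    ext ω
    simp
  have hfail : μ.real {ω | ∀ i, P i ω}ᶜ ≤ Fintype.card ι * ε := by
    rw [hcompl]
    calc _ ≤ ∑ i, μ.real {ω | ¬ P i ω} := measureReal_iUnion_fintype_le _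
      _ ≤ ∑ _i : ι, ε := sum_le_sum fun i _ => hε i
      _ = Fintype.card ι * ε := by simp
  rw [probReal_compl_eq_one_sub hP] at hfail
  rw [← ofReal_measureReal]
  exact ENNReal.ofReal_le_ofReal (by linarith)

lemma nat_mul_two_mul_exp_neg_six_mul_log_le {n : ℕ} (hn : 2 ≤ n) :
    (n : ℝ) * (2 * exp (-6 * log n)) ≤ 1 / 10 := by
  have hn' : (2 : ℝ) ≤ n := by exact_mod_cast hn
  have h32 : (32 : ℝ) ≤ (n : ℝ) ^ 5 := by
    calc (32 : ℝ) = 2 ^ 5 := by norm_num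
      _ ≤ (n : ℝ) ^ 5 := by gcongr
  rw [neg_mul, exp_neg, show (6 : ℝ) = ((6 : ℕ) : ℝ) by norm_num, ← log_pow,
    exp_log (by positivity), mul_comm 2, ← mul_assoc,
    show (n : ℝ) * ((n : ℝ) ^ 6)⁻¹ = ((n : ℝ) ^ 5)⁻¹ by field_simp, ← div_eq_inv_mul,
    div_le_iff₀ (by positivity)]
  linarith

/-- Lemma 5.2 (lm_sampledist): there is an absolute constant `C > 0` such that for any
probability vector `p` on `Fin n` (`n ≥ 2`) and sample sizes `1 ≤ t₁ ≤ t₂`, with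
probability at least `9/10` over independent samples `ω ~ p^{t₁}` and `ω' ~ p^{t₂}`,
every letter `i` satisfies `X i ≤ C · log n · max 1 ((t₁/t₂) · Y i)`, where `X i, Y i`
are the occurrence counts of `i` in `ω, ω'`. -/
theorem sample_dist_occurrence_bound :
    ∃ C : ℝ, 0 < C ∧
      ∀ (n : ℕ), 2 ≤ n → ∀ (p : Fin n → ℝ) (hp0 : ∀ i, 0 ≤ p i) (hp1 : ∑ i, p i = 1)
        (t₁ t₂ : ℕ), 1 ≤ t₁ → t₁ ≤ t₂ →
        (9 / 10 : ENNReal) ≤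
          ((Measure.pi fun _ : Fin t₁ => (pmfOfVec p hp0 hp1).toMeasure).prod
            (Measure.pi fun _ : Fin t₂ => (pmfOfVec p hp0 hp1).toMeasure))
            {ω : (Fin t₁ → Fin n) × (Fin t₂ → Fin n) |
              ∀ i : Fin n,
                ((Finset.univ.filter fun s => ω.1 s = i).card : ℝ) ≤
                  C * Real.log n *
                    max 1 (((t₁ : ℝ) / (t₂ : ℝ)) *
                      ((Finset.univ.filter fun s => ω.2 s = i).card : ℝ))} := by
  refine ⟨128, by norm_num, fun n hn p hp0 hp1 t₁ t₂ _ ht => ?_⟩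
  have hL : 1 / 4 ≤ log n := by
    have : log 2 ≤ log n := log_le_log two_pos (by exact_mod_cast hn)
    linarith [log_two_gt_d9]
  have hfail := fun i : Fin n =>
    measureReal_card_filter_gt_ratio_le (pmfOfVec p hp0 hp1).toMeasure i hL
      (ι₁ := Fin t₁) (ι₂ := Fin t₂) (by simpa using ht)
  simp only [Fintype.card_fin, ← not_le] at hfail
  calc (9 / 10 : ENNReal) = ENNReal.ofReal (9 / 10) := by
        rw [ENNReal.ofReal_div_of_pos (by norm_num)]
        norm_num
    _ ≤ ENNReal.ofReal (1 - Fintype.card (Fin n) * (2 * exp (-6 * log n))) := by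
        rw [Fintype.card_fin]
        gcongr
        linarith [nat_mul_two_mul_exp_neg_six_mul_log_le hn]
    _ ≤ _ := ofReal_one_sub_card_mul_le_measure_forall MeasurableSet.of_discrete hfail
end

section
/- Let n ≥ 1 and 1 ≤ l ≤ n be natural numbers, let p be a probability vector on Fin n, and let u be a real number with ∑_i (p i)² ≤ u and (l : ℝ) ≥ 100 · u · n. Then the fraction of l-element subsets U of Fin n satisfying l/(2n) ≤ ∑_{i ∈ U} p i ≤ 3l/(2n) is at least 0.96. -/
/-!
For a uniformly random `l`-subset `U` of an `n`-set put `X U = ∑ i ∈ U, p i`. Counting the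
`l`-subsets through one or two prescribed points gives `E X = l / n` and a closed form for
`E X²`, whence `Var X ≤ (l / n) ∑ p i ² ≤ (l / n)² / 100`. Chebyshev's inequality at distance
`l / (2n)` then bounds the exceptional fraction by `4 / 100`. By Cauchy–Schwarz,
`1 = (∑ p i)² ≤ n ∑ p i ²`, so `l ≥ 100`, which covers the condition `l ≥ 2` of the
second-moment computation.
-/

open Finset

namespace Finset

lemma sum_sum_eq_sum_card_filter_nsmul {α β M : Type*} [Fintype β] [DecidableEq β]
    [AddCommMonoid M] (P : Finset α) (F : α → Finset β) (g : β → M) :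
    ∑ U ∈ P, ∑ x ∈ F U, g x = ∑ x, #{U ∈ P | x ∈ F U} • g x := by
  rw [sum_comm' (t' := univ) (s' := fun x => {U ∈ P | x ∈ F U}) (by simp)]
  simp only [sum_const]

lemma card_sub_sum_sq_div_le_card_filter_mem_Icc {ι : Type*} (s : Finset ι) (X : ι → ℝ)
    (m : ℝ) {ε : ℝ} (hε : 0 < ε) :
    #s - (∑ i ∈ s, (X i - m) ^ 2) / ε ^ 2 ≤ #{i ∈ s | X i ∈ Set.Icc (m - ε) (m + ε)} := by
  have hfar : (#{i ∈ s | X i ∉ Set.Icc (m - ε) (m + ε)} : ℝ) * ε ^ 2 ≤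
      ∑ i ∈ s, (X i - m) ^ 2 :=
    calc (#{i ∈ s | X i ∉ Set.Icc (m - ε) (m + ε)} : ℝ) * ε ^ 2
        = ∑ i ∈ s with X i ∉ Set.Icc (m - ε) (m + ε), ε ^ 2 := by
          rw [sum_const, nsmul_eq_mul]
      _ ≤ ∑ i ∈ s with X i ∉ Set.Icc (m - ε) (m + ε), (X i - m) ^ 2 :=
          sum_le_sum fun i hi => by
            have hout := (mem_filter.1 hi).2
            rw [← Set.mem_Icc_iff_abs_le, abs_sub_comm, not_le] at hout
            rw [← sq_abs (X i - m)]
            exact pow_le_pow_left₀ hε.le hout.le 2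
      _ ≤ ∑ i ∈ s, (X i - m) ^ 2 :=
          sum_le_sum_of_subset_of_nonneg (filter_subset _ _) fun i _ _ => sq_nonneg _
  have hsplit := card_filter_add_card_filter_not (s := s) (fun i => X i ∈ Set.Icc (m - ε) (m + ε))
  rw [← hsplit, Nat.cast_add, add_sub_assoc, add_le_iff_nonpos_right, sub_nonpos,
    le_div_iff₀ (by positivity)]
  exact hfar

end Finset

lemma Nat.mul_choose_sub_one (n : ℕ) {k : ℕ} (hk : k ≠ 0) :
    n * (n - 1).choose (k - 1) = k * n.choose k := by
  obtain ⟨k, rfl⟩ := Nat.exists_eq_succ_of_ne_zero hk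
  cases n with
  | zero => simp
  | succ n => simpa [mul_comm] using Nat.add_one_mul_choose_eq n k

lemma Nat.cast_choose_sub_two_le {n k : ℕ} (hk : 2 ≤ k) (hkn : k ≤ n) :
    ((n - 2).choose (k - 2) : ℝ) ≤ k / n * (n - 1).choose (k - 1) := by
  have h := congrArg (Nat.cast (R := ℝ)) (Nat.mul_choose_sub_one (n - 1) (k := k - 1) (by omega))
  rw [show n - 1 - 1 = n - 2 by omega, show k - 1 - 1 = k - 2 by omega] at h
  push_cast [Nat.cast_sub (show 1 ≤ n by omega), Nat.cast_sub (show 1 ≤ k by omega)] at h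
  have hn₁ : (1 : ℝ) < n := by norm_cast; omega
  have hkn' : (k : ℝ) ≤ n := by exact_mod_cast hkn
  rw [div_mul_eq_mul_div, le_div_iff₀ (by linarith), ← mul_le_mul_iff_right₀ (sub_pos.2 hn₁)]
  nlinarith [mul_nonneg (sub_nonneg.2 hkn') (Nat.cast_nonneg (α := ℝ) ((n - 1).choose (k - 1)))]

section powersetCard

variable {α : Type*} [Fintype α] {k : ℕ}

lemma card_powersetCard_univ_filter_superset [DecidableEq α] (s : Finset α) (hk : #s ≤ k) :
    #{U ∈ powersetCard k (univ : Finset α) | s ⊆ U} =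
      (Fintype.card α - #s).choose (k - #s) := by
  rw [card_filter_powersetCard_subset s univ k (subset_univ _) hk, card_univ]

lemma sum_powersetCard_univ_sum {M : Type*} [AddCommMonoid M] (f : α → M) (hk : 1 ≤ k) :
    ∑ U ∈ powersetCard k univ, ∑ i ∈ U, f i = (Fintype.card α - 1).choose (k - 1) • ∑ i, f i := by
  classical
  have hcount (i : α) :
      #{U ∈ powersetCard k univ | i ∈ U} = (Fintype.card α - 1).choose (k - 1) := by
    simpa using card_powersetCard_univ_filter_superset {i} (by simpa using hk)
  simp only [sum_sum_eq_sum_card_filter_nsmul, hcount, smul_sum]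

lemma sum_powersetCard_univ_sum_sq {R : Type*} [CommRing R] (f : α → R) (hk : 2 ≤ k) :
    ∑ U ∈ powersetCard k univ, (∑ i ∈ U, f i) ^ 2 =
      ((Fintype.card α - 2).choose (k - 2) : R) * (∑ i, f i) ^ 2 +
        (((Fintype.card α - 1).choose (k - 1) : R) - (Fintype.card α - 2).choose (k - 2)) *
          ∑ i, f i ^ 2 := by
  classical
  set c₁ : R := ((Fintype.card α - 1).choose (k - 1) : R)
  set c₂ : R := ((Fintype.card α - 2).choose (k - 2) : R)
  have hsq (U : Finset α) : (∑ i ∈ U, f i) ^ 2 = ∑ x ∈ U ×ˢ U, f x.1 * f x.2 := by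
    rw [sq, sum_mul_sum, sum_product]
  have hcount (x : α × α) : (#{U ∈ powersetCard k univ | x ∈ U ×ˢ U} : R) =
      c₂ + if x.1 = x.2 then c₁ - c₂ else 0 := by
    have hpair : #{U ∈ powersetCard k univ | x ∈ U ×ˢ U} =
        #{U ∈ powersetCard k univ | {x.1, x.2} ⊆ U} := by
      congr 1; exact filter_congr fun U _ => by simp [insert_subset_iff]
    obtain ⟨i, j⟩ := x
    by_cases hij : i = j
    · subst hij
      rw [hpair, card_powersetCard_univ_filter_superset _ (by simp; omega)]
      simp [c₁]
    · rw [hpair, card_powersetCard_univ_filter_superset _ (by rw [card_pair hij]; omega)]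
      simp [card_pair hij, hij, c₂]
  have hsq_univ : (∑ i, f i) ^ 2 = ∑ x : α × α, f x.1 * f x.2 := by
    rw [hsq, univ_product_univ]
  rw [sum_congr rfl fun U _ => hsq U, sum_sum_eq_sum_card_filter_nsmul, hsq_univ]
  simp only [nsmul_eq_mul, hcount, add_mul, sum_add_distrib, ← mul_sum, ite_mul, zero_mul,
    Fintype.sum_prod_type, sum_ite_eq, mem_univ, if_true, sq]

lemma sum_powersetCard_univ_sum_sub_sq_le (f : α → ℝ) (hk : 2 ≤ k)
    (hkn : k ≤ Fintype.card α) :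
    ∑ U ∈ powersetCard k univ, (∑ i ∈ U, f i - k / Fintype.card α * ∑ i, f i) ^ 2 ≤
      (Fintype.card α).choose k * (k / Fintype.card α) * ∑ i, f i ^ 2 := by
  set n := Fintype.card α
  set A := ∑ i, f i
  set Q := ∑ i, f i ^ 2
  set c₁ : ℝ := ↑((n - 1).choose (k - 1))
  set c₂ : ℝ := ↑((n - 2).choose (k - 2))
  set N : ℝ := ↑(n.choose k)
  have hc₁ : c₁ = k / n * N := by
    have h : (n : ℝ) * c₁ = k * N := by
      simp only [c₁, N]; exact_mod_cast Nat.mul_choose_sub_one n (k := k) (by omega)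
    have hn : (n : ℝ) ≠ 0 := by norm_cast; omega
    field_simp; linarith
  have hc₂ : 0 ≤ c₂ := Nat.cast_nonneg _
  have hc₂_le : c₂ ≤ k / n * c₁ := Nat.cast_choose_sub_two_le hk hkn
  have hQ : 0 ≤ Q := sum_nonneg fun i _ => sq_nonneg (f i)
  have hexpand : ∑ U ∈ powersetCard k univ, (∑ i ∈ U, f i - k / n * A) ^ 2 =
      c₂ * A ^ 2 + (c₁ - c₂) * Q - 2 * (k / n * A) * (c₁ * A) + N * (k / n * A) ^ 2 := by
    simp only [sub_sq, sum_add_distrib, sum_sub_distrib, ← sum_mul, ← mul_sum, sum_const,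
      nsmul_eq_mul, card_powersetCard, card_univ, sum_powersetCard_univ_sum_sq f hk,
      sum_powersetCard_univ_sum f (by omega : 1 ≤ k)]
    ring
  rw [hexpand, hc₁]
  rw [hc₁] at hc₂_le
  -- the difference of the two sides is `-(c₂ * Q + (k / n * c₁ - c₂) * A ^ 2)`
  nlinarith [mul_nonneg hc₂ hQ, mul_nonneg (sub_nonneg.2 hc₂_le) (sq_nonneg A)]

end powersetCard

theorem conditional_mass_concentration_general (n l : ℕ) (hln : l ≤ n)
    (p : Fin n → ℝ) (hp1 : ∑ i, p i = 1)
    (u : ℝ) (hu : ∑ i, (p i) ^ 2 ≤ u) (hl : (100 : ℝ) * u * n ≤ (l : ℝ)) :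
    (0.96 : ℝ) ≤
      (((Finset.powersetCard l (Finset.univ : Finset (Fin n))).filter
          (fun U => (l : ℝ) / (2 * n) ≤ ∑ i ∈ U, p i ∧
            ∑ i ∈ U, p i ≤ 3 * (l : ℝ) / (2 * n))).card : ℝ) /
        (Nat.choose n l : ℝ) := by
  have hn : (0 : ℝ) < n := by
    rcases Nat.eq_zero_or_pos n with rfl | hn
    · simp at hp1
    · exact_mod_cast hn
  have hcs : 1 ≤ (n : ℝ) * ∑ i, p i ^ 2 := by
    simpa [hp1] using sq_sum_le_card_mul_sum_sq (s := univ) (f := p)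
  have hl₂ : 2 ≤ l := by exact_mod_cast (by nlinarith : (2 : ℝ) ≤ l)
  have hvar := sum_powersetCard_univ_sum_sub_sq_le p hl₂ (by simpa)
  set m : ℝ := l / n
  have hm : 0 < m := by positivity
  have hq : ∑ i, p i ^ 2 ≤ m / 100 := by
    rw [le_div_iff₀ (by norm_num), le_div_iff₀ hn]
    nlinarith [mul_le_mul_of_nonneg_right hu hn.le]
  have hnear := card_sub_sum_sq_div_le_card_filter_mem_Icc (powersetCard l univ)
    (fun U => ∑ i ∈ U, p i) m (half_pos hm)
  simp only [Fintype.card_fin, hp1, mul_one, card_powersetCard, card_univ, Set.mem_Icc]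
    at hvar hnear
  have hvar_div : (∑ U ∈ powersetCard l univ, (∑ i ∈ U, p i - m) ^ 2) / (m / 2) ^ 2 ≤
      0.04 * n.choose l := by
    rw [div_le_iff₀ (by positivity)]
    nlinarith [mul_le_mul_of_nonneg_left hq (by positivity : (0 : ℝ) ≤ n.choose l * m)]
  rw [show (l : ℝ) / (2 * n) = m - m / 2 by ring, show 3 * (l : ℝ) / (2 * n) = m + m / 2 by ring,
    le_div_iff₀ (Nat.cast_pos.2 (Nat.choose_pos hln))]
  linarith

/-- Lemma 6.4(1) (lem_sumpi) with explicit constants: if `‖p‖₂² ≤ u` and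
`l ≥ 100·u·n`, then the fraction of `l`-element subsets `U` of `Fin n` with
`l/(2n) ≤ ∑ i ∈ U, p i ≤ 3l/(2n)` is at least `0.96`. -/
theorem conditional_mass_concentration (n l : ℕ) (hn : 1 ≤ n) (hl1 : 1 ≤ l) (hln : l ≤ n)
    (p : Fin n → ℝ) (hp0 : ∀ i, 0 ≤ p i) (hp1 : ∑ i, p i = 1)
    (u : ℝ) (hu : ∑ i, (p i) ^ 2 ≤ u) (hl : (100 : ℝ) * u * n ≤ (l : ℝ)) :
    (0.96 : ℝ) ≤
      (((Finset.powersetCard l (Finset.univ : Finset (Fin n))).filter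
          (fun U => (l : ℝ) / (2 * n) ≤ ∑ i ∈ U, p i ∧
            ∑ i ∈ U, p i ≤ 3 * (l : ℝ) / (2 * n))).card : ℝ) /
        (Nat.choose n l : ℝ) :=
  conditional_mass_concentration_general n l hln p hp1 u hu hl
end

section
/- Let n ≥ 1 and 1 ≤ l ≤ n be natural numbers, let p be a probability vector on Fin n, and let u > 0 be a real number with ∑_i (p i)² ≤ u and (l : ℝ) ≥ 100 · u · n. Then the fraction of l-element subsets U of Fin n satisfying both ∑_{i ∈ U} p i ≥ l/(2n) and (∑_{i ∈ U} (p i)²) / (∑_{i ∈ U} p i)² ≤ 400 · u · n / l is at least 0.95. -/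
/-!
For a uniformly random `l`-subset `U` of an `n`-set, put `m = l / n`, `S = ∑_{i ∈ U} p i` and
`Q = ∑_{i ∈ U} p i ^ 2`. Double counting gives `𝔼 S = m`, `𝔼 Q = m ‖p‖₂²`, and, since a pair
`{i, j}` lies in `U` with probability `l (l - 1) / (n (n - 1)) ≤ m²`, `Var S ≤ m ‖p‖₂²`.
Chebyshev then gives `S ≥ m / 2` outside probability `4 ‖p‖₂² / m ≤ 0.04`, Markov gives
`Q < 100 u m` outside probability `0.01`, and outside both events `Q / S² ≤ 400 u / m`.
Cauchy–Schwarz, `1 ≤ n ‖p‖₂²`, makes `l ≥ 100`.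
-/

open Finset

section DoubleCounting

variable {α ι : Type*} [Fintype α] [DecidableEq α]

theorem sum_powersetCard_sum_filter_subset {M : Type*} [AddCommMonoid M] (X : Finset ι)
    (s : ι → Finset α) {k l : ℕ} (hs : ∀ x ∈ X, #(s x) = k) (hkl : k ≤ l) (f : ι → M) :
    ∑ U ∈ powersetCard l univ, ∑ x ∈ X with s x ⊆ U, f x
      = (Fintype.card α - k).choose (l - k) • ∑ x ∈ X, f x := by
  rw [sum_comm' (t' := X) (s' := fun x => {U ∈ powersetCard l univ | s x ⊆ U})
    (fun U x => by simp only [mem_filter]; tauto), smul_sum]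
  refine sum_congr rfl fun x hx => ?_
  rw [sum_const, card_filter_powersetCard_subset _ _ _ (subset_univ _) (hs x hx ▸ hkl), hs x hx,
    card_univ]

theorem sum_powersetCard_sum_filter_subset_eq_mul (X : Finset ι) (s : ι → Finset α) {k l : ℕ}
    (hs : ∀ x ∈ X, #(s x) = k) (hkl : k ≤ l) (hl : l ≤ Fintype.card α) (f : ι → ℝ) :
    ∑ U ∈ powersetCard l univ, ∑ x ∈ X with s x ⊆ U, f x
      = l.choose k / (Fintype.card α).choose k * (Fintype.card α).choose l * ∑ x ∈ X, f x := by
  have hchoose : ((Fintype.card α).choose l * l.choose k : ℝ)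
      = (Fintype.card α).choose k * (Fintype.card α - k).choose (l - k) := by
    exact_mod_cast Nat.choose_mul hkl
  have hpos : (0 : ℝ) < (Fintype.card α).choose k := by
    exact_mod_cast Nat.choose_pos (hkl.trans hl)
  rw [sum_powersetCard_sum_filter_subset X s hs hkl, nsmul_eq_mul]
  field_simp
  linear_combination -(∑ x ∈ X, f x) * hchoose

theorem sum_powersetCard_sum_eq_mul {l : ℕ} (hl1 : 1 ≤ l) (hl : l ≤ Fintype.card α)
    (f : α → ℝ) :
    ∑ U ∈ powersetCard l univ, ∑ i ∈ U, f i
      = l / Fintype.card α * (Fintype.card α).choose l * ∑ i, f i := by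
  simpa [singleton_subset_iff] using sum_powersetCard_sum_filter_subset_eq_mul univ singleton
    (fun _ _ => card_singleton _) hl1 hl f

theorem sum_powersetCard_sum_offDiag_eq_mul {l : ℕ} (hl2 : 2 ≤ l) (hl : l ≤ Fintype.card α)
    (f : α × α → ℝ) :
    ∑ U ∈ powersetCard l univ, ∑ x ∈ U.offDiag, f x
      = l.choose 2 / (Fintype.card α).choose 2 * (Fintype.card α).choose l
          * ∑ x ∈ univ.offDiag, f x := by
  rw [← sum_powersetCard_sum_filter_subset_eq_mul univ.offDiag (fun x => {x.1, x.2})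
    (fun x hx => card_pair (mem_offDiag.1 hx).2.2) hl2 hl f]
  refine sum_congr rfl fun U _ => sum_congr ?_ fun _ _ => rfl
  ext x
  simp only [mem_offDiag, mem_filter, mem_univ, true_and, insert_subset_iff,
    singleton_subset_iff]
  tauto

end DoubleCounting

theorem sq_sum_eq_sum_sq_add_sum_offDiag {α R : Type*} [DecidableEq α] [CommSemiring R]
    (s : Finset α) (f : α → R) :
    (∑ i ∈ s, f i) ^ 2 = ∑ i ∈ s, f i ^ 2 + ∑ x ∈ s.offDiag, f x.1 * f x.2 := by
  rw [sq, sum_mul_sum, ← sum_product', ← diag_union_offDiag, sum_union (disjoint_diag_offDiag s)]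
  simp [sq]

theorem choose_two_div_choose_two_le_sq {l n : ℕ} (hl : l ≤ n) :
    (l.choose 2 / n.choose 2 : ℝ) ≤ (l / n) ^ 2 := by
  rcases lt_or_ge n 2 with hn | hn
  · simp only [Nat.choose_eq_zero_of_lt hn, Nat.cast_zero, div_zero]
    positivity
  have hl' : (l : ℝ) ≤ n := by exact_mod_cast hl
  have hn' : (2 : ℝ) ≤ n := by exact_mod_cast hn
  rw [Nat.cast_choose_two, Nat.cast_choose_two, div_pow,
    div_le_div_iff₀ (by nlinarith) (by positivity)]
  nlinarith [mul_nonneg (mul_nonneg l.cast_nonneg n.cast_nonneg) (sub_nonneg.2 hl')]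

theorem card_filter_nsmul_le_sum {β M : Type*} [AddCommMonoid M] [PartialOrder M]
    [IsOrderedAddMonoid M] [DecidableLE M] (P : Finset β) (g : β → M) (hg : ∀ U ∈ P, 0 ≤ g U)
    (t : M) :
    #{U ∈ P | t ≤ g U} • t ≤ ∑ U ∈ P, g U :=
  (card_nsmul_le_sum _ _ _ fun _ hU => (mem_filter.1 hU).2).trans <|
    sum_le_sum_of_subset_of_nonneg (filter_subset _ _) fun U hU _ => hg U hU

theorem card_sub_card_filter_sub_card_filter_le {β : Type*} [DecidableEq β] (P : Finset β)
    {A B G : β → Prop} [DecidablePred A] [DecidablePred B] [DecidablePred G]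
    (h : ∀ U ∈ P, ¬A U → ¬B U → G U) :
    (#P : ℝ) - #{U ∈ P | A U} - #{U ∈ P | B U} ≤ #{U ∈ P | G U} := by
  have hcover : P ⊆ {U ∈ P | G U} ∪ ({U ∈ P | A U} ∪ {U ∈ P | B U}) := by
    intro U hU
    simp only [mem_union, mem_filter]
    by_cases hA : A U
    · tauto
    by_cases hB : B U
    · tauto
    exact .inl ⟨hU, h U hU hA hB⟩
  have := (card_le_card hcover).trans <| (card_union_le _ _).trans <|
    Nat.add_le_add_left (card_union_le _ _) _
  rw [sub_sub, sub_le_iff_le_add]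
  exact_mod_cast this

theorem one_le_card_mul_sum_sq {α : Type*} [Fintype α] {p : α → ℝ} (hp1 : ∑ i, p i = 1) :
    1 ≤ Fintype.card α * ∑ i, p i ^ 2 := by
  simpa [hp1] using sq_sum_le_card_mul_sum_sq (s := univ) (f := p)

section RandomSubset

variable {α : Type*} [Fintype α] [DecidableEq α] (p : α → ℝ) {l : ℕ}

theorem sum_powersetCard_sq_sum_sub_le (hp0 : ∀ i, 0 ≤ p i) (hp1 : ∑ i, p i = 1) (hl2 : 2 ≤ l)
    (hl : l ≤ Fintype.card α) :
    ∑ U ∈ powersetCard l univ, (∑ i ∈ U, p i - l / Fintype.card α) ^ 2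
      ≤ l / Fintype.card α * (Fintype.card α).choose l * ∑ i, p i ^ 2 := by
  set m : ℝ := l / Fintype.card α
  set N : ℝ := ↑((Fintype.card α).choose l)
  set c : ℝ := l.choose 2 / (Fintype.card α).choose 2
  set s2 := ∑ i, p i ^ 2
  have hoff : ∑ x ∈ univ.offDiag, p x.1 * p x.2 = 1 - s2 := by
    have := sq_sum_eq_sum_sq_add_sum_offDiag univ p
    rw [hp1] at this
    linarith
  have hs2 : 0 ≤ 1 - s2 := hoff ▸ sum_nonneg fun x _ => mul_nonneg (hp0 _) (hp0 _)
  have hsum : ∑ U ∈ powersetCard l univ, ∑ i ∈ U, p i = m * N := by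
    rw [sum_powersetCard_sum_eq_mul (by omega) hl, hp1, mul_one]
  have hsq : ∑ U ∈ powersetCard l univ, (∑ i ∈ U, p i) ^ 2 = m * N * s2 + c * N * (1 - s2) := by
    simp_rw [sq_sum_eq_sum_sq_add_sum_offDiag]
    rw [sum_add_distrib, sum_powersetCard_sum_eq_mul (by omega) hl,
      sum_powersetCard_sum_offDiag_eq_mul hl2 hl (fun x => p x.1 * p x.2), hoff]
  have hcard : (#(powersetCard l (univ : Finset α)) : ℝ) = N := by simp [N]
  have hc : c ≤ m ^ 2 := choose_two_div_choose_two_le_sq hl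
  have hN : 0 ≤ N := Nat.cast_nonneg _
  simp only [sub_sq, sum_add_distrib, sum_sub_distrib, ← sum_mul, ← mul_sum, sum_const,
    nsmul_eq_mul, hsq, hsum, hcard]
  nlinarith [mul_le_mul_of_nonneg_right hc (mul_nonneg hN hs2),
    mul_nonneg (mul_nonneg (sq_nonneg m) hN) (sum_nonneg fun i _ => sq_nonneg (p i) : 0 ≤ s2)]

theorem card_filter_le_sq_sum_sub_mul_le (hp0 : ∀ i, 0 ≤ p i) (hp1 : ∑ i, p i = 1)
    (hl2 : 2 ≤ l) (hl : l ≤ Fintype.card α) (t : ℝ) :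
    #{U ∈ powersetCard l univ | t ≤ (∑ i ∈ U, p i - l / Fintype.card α) ^ 2} * t
      ≤ l / Fintype.card α * (Fintype.card α).choose l * ∑ i, p i ^ 2 := by
  rw [← nsmul_eq_mul]
  exact (card_filter_nsmul_le_sum _ _ (fun _ _ => sq_nonneg _) t).trans
    (sum_powersetCard_sq_sum_sub_le p hp0 hp1 hl2 hl)

theorem card_filter_le_sum_sq_mul_le (hl1 : 1 ≤ l) (hl : l ≤ Fintype.card α) (t : ℝ) :
    #{U ∈ powersetCard l univ | t ≤ ∑ i ∈ U, p i ^ 2} * t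
      ≤ l / Fintype.card α * (Fintype.card α).choose l * ∑ i, p i ^ 2 := by
  rw [← nsmul_eq_mul, ← sum_powersetCard_sum_eq_mul hl1 hl]
  exact card_filter_nsmul_le_sum _ _ (fun _ _ => sum_nonneg fun i _ => sq_nonneg (p i)) t

theorem card_filter_half_le_sq_sum_sub_le (hp0 : ∀ i, 0 ≤ p i) (hp1 : ∑ i, p i = 1) {u : ℝ}
    (hu : ∑ i, p i ^ 2 ≤ u) (hl2 : 2 ≤ l) (hl : l ≤ Fintype.card α)
    (hul : 100 * u * Fintype.card α ≤ l) :
    #{U ∈ powersetCard l univ |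
        (l / Fintype.card α / 2 : ℝ) ^ 2 ≤ (∑ i ∈ U, p i - l / Fintype.card α) ^ 2}
      ≤ 0.04 * ((Fintype.card α).choose l : ℝ) := by
  have hn : (0 : ℝ) < Fintype.card α := Nat.cast_pos.2 (by omega)
  have hm : (0 : ℝ) < l / Fintype.card α := div_pos (Nat.cast_pos.2 (by omega)) hn
  have hum : 100 * u ≤ l / Fintype.card α := by rw [le_div_iff₀ hn]; linarith
  refine le_of_mul_le_mul_right ((card_filter_le_sq_sum_sub_mul_le p hp0 hp1 hl2 hl _).trans ?_)
    (by positivity : (0 : ℝ) < (l / Fintype.card α / 2) ^ 2)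
  have hN : (0 : ℝ) ≤ (Fintype.card α).choose l := Nat.cast_nonneg _
  nlinarith [mul_le_mul_of_nonneg_left hu (mul_nonneg hm.le hN),
    mul_le_mul_of_nonneg_left hum (mul_nonneg hN hm.le)]

theorem card_filter_le_sum_sq_le {u : ℝ} (hu : ∑ i, p i ^ 2 ≤ u) (hu0 : 0 < u) (hl1 : 1 ≤ l)
    (hl : l ≤ Fintype.card α) :
    #{U ∈ powersetCard l univ | 100 * u * (l / Fintype.card α) ≤ ∑ i ∈ U, p i ^ 2}
      ≤ 0.01 * ((Fintype.card α).choose l : ℝ) := by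
  have hm : (0 : ℝ) < l / Fintype.card α :=
    div_pos (Nat.cast_pos.2 hl1) (Nat.cast_pos.2 (by omega))
  refine le_of_mul_le_mul_right ((card_filter_le_sum_sq_mul_le p hl1 hl _).trans ?_)
    (by positivity : 0 < 100 * u * (l / Fintype.card α))
  have hN : (0 : ℝ) ≤ (Fintype.card α).choose l := Nat.cast_nonneg _
  nlinarith [mul_le_mul_of_nonneg_left hu (mul_nonneg hm.le hN)]

end RandomSubset

theorem half_le_and_div_sq_le_of_sq_sub_lt {m S Q c : ℝ} (hm : 0 < m)
    (hS : (S - m) ^ 2 < (m / 2) ^ 2) (hQ0 : 0 ≤ Q) (hQ : Q < c) :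
    m / 2 ≤ S ∧ Q / S ^ 2 ≤ c / (m / 2) ^ 2 := by
  have hmS : m / 2 ≤ S := by nlinarith
  exact ⟨hmS, div_le_div₀ (hQ0.trans hQ.le) hQ.le (by positivity) (by gcongr)⟩

theorem conditional_l2_bound_general (n l : ℕ) (hln : l ≤ n)
    (p : Fin n → ℝ) (hp0 : ∀ i, 0 ≤ p i) (hp1 : ∑ i, p i = 1)
    (u : ℝ) (hu : ∑ i, (p i) ^ 2 ≤ u) (hl : (100 : ℝ) * u * n ≤ (l : ℝ)) :
    (0.95 : ℝ) ≤
      (((Finset.powersetCard l (Finset.univ : Finset (Fin n))).filter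
          (fun U => (l : ℝ) / (2 * n) ≤ ∑ i ∈ U, p i ∧
            (∑ i ∈ U, (p i) ^ 2) / (∑ i ∈ U, p i) ^ 2 ≤ 400 * u * n / l)).card : ℝ) /
        (Nat.choose n l : ℝ) := by
  have hun : 1 ≤ n * u := by
    simpa using (one_le_card_mul_sum_sq hp1).trans (by simp only [Fintype.card_fin]; gcongr)
  have hl2 : 2 ≤ l := by exact_mod_cast (by nlinarith : (2 : ℝ) ≤ l)
  have hu0 : 0 < u := pos_of_mul_pos_right (one_pos.trans_le hun) n.cast_nonneg
  have hln' : l ≤ Fintype.card (Fin n) := by simpa using hln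
  have hdev := card_filter_half_le_sq_sum_sub_le p hp0 hp1 hu hl2 hln' (by simpa using hl)
  have hmass := card_filter_le_sum_sq_le p hu hu0 (by omega) hln'
  simp only [Fintype.card_fin] at hdev hmass
  set m : ℝ := l / n with hm_def
  rw [le_div_iff₀ (Nat.cast_pos.2 (Nat.choose_pos hln))]
  refine le_trans ?_ (card_sub_card_filter_sub_card_filter_le _
    (A := fun U => (m / 2) ^ 2 ≤ (∑ i ∈ U, p i - m) ^ 2)
    (B := fun U => 100 * u * m ≤ ∑ i ∈ U, p i ^ 2) fun U _ hdevU hmassU => ?_)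
  · simp only [card_powersetCard, card_univ, Fintype.card_fin]
    linarith
  · have hn : (0 : ℝ) < n := Nat.cast_pos.2 (by omega)
    have hlR : (0 : ℝ) < l := Nat.cast_pos.2 (by omega)
    rw [show l / (2 * n : ℝ) = m / 2 by rw [hm_def]; field_simp,
      show 400 * u * n / l = 100 * u * m / (m / 2) ^ 2 by rw [hm_def]; field_simp; ring]
    exact half_le_and_div_sq_le_of_sq_sub_lt (by positivity) (not_le.1 hdevU)
      (sum_nonneg fun i _ => sq_nonneg (p i)) (not_le.1 hmassU)

/-- Lemma 6.4(2) (lem_sumpi) with explicit constants: if `‖p‖₂² ≤ u` and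
`l ≥ 100·u·n`, then the fraction of `l`-element subsets `U` of `Fin n` with
`∑ i ∈ U, p i ≥ l/(2n)` and `‖p_{|U}‖₂² = (∑_{i∈U} p i²)/(∑_{i∈U} p i)² ≤ 400·u·n/l`
is at least `0.95`. -/
theorem conditional_l2_bound (n l : ℕ) (hn : 1 ≤ n) (hl1 : 1 ≤ l) (hln : l ≤ n)
    (p : Fin n → ℝ) (hp0 : ∀ i, 0 ≤ p i) (hp1 : ∑ i, p i = 1)
    (u : ℝ) (hu0 : 0 < u) (hu : ∑ i, (p i) ^ 2 ≤ u) (hl : (100 : ℝ) * u * n ≤ (l : ℝ)) :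
    (0.95 : ℝ) ≤
      (((Finset.powersetCard l (Finset.univ : Finset (Fin n))).filter
          (fun U => (l : ℝ) / (2 * n) ≤ ∑ i ∈ U, p i ∧
            (∑ i ∈ U, (p i) ^ 2) / (∑ i ∈ U, p i) ^ 2 ≤ 400 * u * n / l)).card : ℝ) /
        (Nat.choose n l : ℝ) :=
  conditional_l2_bound_general n l hln p hp0 hp1 u hu hl
end

section
/- Let n ≥ 1 and 1 ≤ l ≤ n be natural numbers, let p be a probability vector on Fin n, let Δ : Fin n → ℝ satisfy 0 ≤ Δ i ≤ 2 for all i, and let u, ε be real numbers with ∑_i (p i)² ≤ u, 0 < ε ≤ 2, ∑_i p i · Δ i ≥ ε, and (l : ℝ) ≥ 1600 · u · n / ε². Then the fraction of l-element subsets U of Fin n satisfying ∑_{i ∈ U} p i > 0 and (∑_{i ∈ U} p i · Δ i) / (∑_{i ∈ U} p i) ≥ ε/3 is at least 0.9. -/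
open Finset

lemma count_supersets {α : Type*} [DecidableEq α] [Fintype α] (l : ℕ) (s : Finset α)
    (hs : s.card ≤ l) :
    (((Finset.powersetCard l (univ : Finset α))).filter (fun U => s ⊆ U)).card
      = (Fintype.card α - s.card).choose (l - s.card) := by
  have key : (((Finset.powersetCard l (univ : Finset α))).filter (fun U => s ⊆ U)).card
      = (Finset.powersetCard (l - s.card) ((univ : Finset α) \ s)).card := by
    apply Finset.card_bij' (fun U _ => U \ s) (fun V _ => V ∪ s)
    · intro U hU
      simp only [mem_filter, mem_powersetCard] at hU
      obtain ⟨⟨hU1, hU2⟩, hU3⟩ := hU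
      simp only [mem_powersetCard]
      exact ⟨sdiff_subset_sdiff hU1 Subset.rfl, by rw [card_sdiff_of_subset hU3, hU2]⟩
    · intro V hV
      simp only [mem_powersetCard] at hV
      obtain ⟨hV1, hV2⟩ := hV
      have hdisj : Disjoint V s :=
        Finset.disjoint_left.2 fun x hx hxs => (Finset.mem_sdiff.1 (hV1 hx)).2 hxs
      simp only [mem_filter, mem_powersetCard]
      refine ⟨⟨subset_univ _, ?_⟩, subset_union_right⟩
      rw [card_union_of_disjoint hdisj, hV2]
      omega
    · intro U hU
      simp only [mem_filter] at hU
      exact sdiff_union_of_subset hU.2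
    · intro V hV
      simp only [mem_powersetCard] at hV
      have hdisj : Disjoint V s :=
        Finset.disjoint_left.2 fun x hx hxs => (Finset.mem_sdiff.1 (hV.1 hx)).2 hxs
      exact union_sdiff_cancel_right hdisj
  rw [key, card_powersetCard, card_sdiff_of_subset (subset_univ s), card_univ]

lemma count_mem (n l : ℕ) (hl : 1 ≤ l) (i : Fin n) :
    (((Finset.powersetCard l (univ : Finset (Fin n)))).filter (fun U => i ∈ U)).card
      = (n-1).choose (l-1) := by
  have := count_supersets (α := Fin n) l {i} (by simpa using hl)
  simpa [Finset.singleton_subset_iff] using this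

lemma count_pair (n l : ℕ) (hl : 2 ≤ l) (i j : Fin n) (hij : i ≠ j) :
    (((Finset.powersetCard l (univ : Finset (Fin n)))).filter (fun U => i ∈ U ∧ j ∈ U)).card
      = (n-2).choose (l-2) := by
  have hc : ({i, j} : Finset (Fin n)).card = 2 := by
    rw [card_insert_of_notMem (by simpa using hij), card_singleton]
  have := count_supersets (α := Fin n) l {i, j} (by omega)
  rw [hc] at this
  simpa [Finset.insert_subset_iff, Finset.singleton_subset_iff, and_comm] using this

lemma first_moment (n l : ℕ) (hl : 1 ≤ l) (q : Fin n → ℝ) :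
    ∑ U ∈ Finset.powersetCard l (univ : Finset (Fin n)), ∑ i ∈ U, q i
      = ((n-1).choose (l-1) : ℝ) * ∑ i, q i := by
  set P := Finset.powersetCard l (univ : Finset (Fin n))
  calc ∑ U ∈ P, ∑ i ∈ U, q i
      = ∑ U ∈ P, ∑ i : Fin n, if i ∈ U then q i else 0 := by
        refine sum_congr rfl fun U _ => ?_
        rw [Finset.sum_ite_mem, univ_inter]
    _ = ∑ i : Fin n, ∑ U ∈ P, if i ∈ U then q i else 0 := Finset.sum_comm
    _ = ∑ i : Fin n, ((P.filter (fun U => i ∈ U)).card : ℝ) * q i := by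
        refine sum_congr rfl fun i _ => ?_
        rw [← Finset.sum_filter, Finset.sum_const, nsmul_eq_mul]
    _ = ((n-1).choose (l-1) : ℝ) * ∑ i, q i := by
        rw [Finset.mul_sum]
        exact sum_congr rfl fun i _ => by rw [count_mem n l hl i]

lemma second_moment (n l : ℕ) (hl : 2 ≤ l) (q : Fin n → ℝ) :
    ∑ U ∈ Finset.powersetCard l (univ : Finset (Fin n)), (∑ i ∈ U, q i)^2
      = ((n-1).choose (l-1) : ℝ) * ∑ i, (q i)^2
        + ((n-2).choose (l-2) : ℝ) * ((∑ i, q i)^2 - ∑ i, (q i)^2) := by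
  set P := Finset.powersetCard l (univ : Finset (Fin n)) with hP
  set A : ℝ := ((n-1).choose (l-1) : ℝ)
  set B : ℝ := ((n-2).choose (l-2) : ℝ)
  have expand : ∀ U : Finset (Fin n), (∑ i ∈ U, q i)^2
      = ∑ i : Fin n, ∑ j : Fin n, if i ∈ U ∧ j ∈ U then q i * q j else 0 := by
    intro U
    rw [sq, Finset.sum_mul_sum]
    rw [show (∑ i ∈ U, ∑ j ∈ U, q i * q j)
        = ∑ i : Fin n, if i ∈ U then ∑ j ∈ U, q i * q j else 0 by
      symm; rw [Finset.sum_ite_mem, univ_inter]]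
    refine sum_congr rfl fun i _ => ?_
    by_cases hi : i ∈ U
    · simp only [hi, if_true, true_and]
      symm; rw [Finset.sum_ite_mem, univ_inter]
    · simp [hi]
  have hcount : ∀ i j : Fin n, ((P.filter (fun U => i ∈ U ∧ j ∈ U)).card : ℝ)
      = if i = j then A else B := by
    intro i j
    by_cases hij : i = j
    · subst hij
      simp only [if_true, and_self, A, hP]
      exact_mod_cast count_mem n l (by omega) i
    · rw [if_neg hij, count_pair n l hl i j hij]
  calc ∑ U ∈ P, (∑ i ∈ U, q i)^2
      = ∑ U ∈ P, ∑ i : Fin n, ∑ j : Fin n, if i ∈ U ∧ j ∈ U then q i * q j else 0 :=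
        sum_congr rfl fun U _ => expand U
    _ = ∑ i : Fin n, ∑ U ∈ P, ∑ j : Fin n, if i ∈ U ∧ j ∈ U then q i * q j else 0 :=
        Finset.sum_comm
    _ = ∑ i : Fin n, ∑ j : Fin n, ∑ U ∈ P, if i ∈ U ∧ j ∈ U then q i * q j else 0 :=
        sum_congr rfl fun i _ => Finset.sum_comm
    _ = ∑ i : Fin n, ∑ j : Fin n, (if i = j then A else B) * (q i * q j) := by
        refine sum_congr rfl fun i _ => sum_congr rfl fun j _ => ?_
        rw [← Finset.sum_filter, Finset.sum_const, nsmul_eq_mul, hcount]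
    _ = A * ∑ i, (q i)^2 + B * ((∑ i, q i)^2 - ∑ i, (q i)^2) := by
        have h1 : ∀ i j : Fin n, (if i = j then A else B) * (q i * q j)
            = B * (q i * q j) + (if i = j then (A - B) * (q i * q j) else 0) := by
          intro i j; by_cases h : i = j <;> simp [h] <;> ring
        simp_rw [h1, Finset.sum_add_distrib, Finset.sum_ite_eq, mem_univ, if_true]
        have h2 : ∑ x : Fin n, ∑ y : Fin n, B * (q x * q y) = B * ((∑ i, q i)^2) := by
          rw [sq, Finset.sum_mul_sum, Finset.mul_sum]
          exact sum_congr rfl fun i _ => (Finset.mul_sum _ _ _).symm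
        have h3 : ∑ x : Fin n, (A - B) * (q x * q x) = (A - B) * ∑ i, (q i)^2 := by
          rw [Finset.mul_sum]; exact sum_congr rfl fun i _ => by ring
        rw [h2, h3]; ring


lemma cheb_arith (A N Q s2 u ε lr nr badc : ℝ)
    (hA0 : 0 < A) (hN0 : 0 < N) (hb0 : 0 ≤ badc)
    (hQ : 2 * ε / 3 ≤ Q) (hε0 : 0 < ε) (hs2u : s2 ≤ 4 * u) (hu0 : 0 < u)
    (hNA : nr * A = N * lr) (hn0 : 0 < nr) (hl0 : 0 < lr)
    (hlε : 1600 * u * nr ≤ lr * ε ^ 2)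
    (hX : badc * (A * Q / N) ^ 2 ≤ A * s2) :
    badc ≤ 9 / 1600 * N := by
  have hQ0 : 0 < Q := by linarith
  have hm2 : (A * Q / N)^2 * N^2 = (A * Q)^2 := by field_simp
  have h6 : badc * (A * Q)^2 ≤ A * s2 * N^2 := by
    calc badc * (A * Q)^2 = (badc * (A * Q / N)^2) * N^2 := by rw [mul_assoc, hm2]
      _ ≤ A * s2 * N^2 := mul_le_mul_of_nonneg_right hX (sq_nonneg N)
  have hQ2 : 4 / 9 * ε^2 ≤ Q^2 := by nlinarith
  have h7a : (badc * A * ε^2) * A ≤ (9 * u * N^2) * A := by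
    nlinarith [mul_le_mul_of_nonneg_left hQ2 (by positivity : (0:ℝ) ≤ badc * A^2),
      mul_le_mul_of_nonneg_right hs2u (by positivity : (0:ℝ) ≤ A * N^2)]
  have h7 : badc * A * ε^2 ≤ 9 * u * N^2 := le_of_mul_le_mul_right h7a hA0
  have h7n : badc * A * ε^2 * nr ≤ 9 * u * N^2 * nr :=
    mul_le_mul_of_nonneg_right h7 hn0.le
  have hlεN : 1600 * u * nr * N^2 ≤ lr * ε^2 * N^2 :=
    mul_le_mul_of_nonneg_right hlε (by positivity)
  have hsub : badc * ε^2 * (nr * A) = badc * ε^2 * (N * lr) := by rw [hNA]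
  have h8a : badc * (lr * ε^2 * N) ≤ (9 / 1600 * N) * (lr * ε^2 * N) := by
    nlinarith [h7n, hlεN, hsub]
  exact le_of_mul_le_mul_right h8a (by positivity)

lemma var_arith (A B N Q s2 lr nr m : ℝ)
    (hA0 : 0 < A) (hB0 : 0 ≤ B) (hN0 : 0 < N) (hs20 : 0 ≤ s2)
    (hNA : nr * A = N * lr) (hAB : (nr - 1) * B = A * (lr - 1))
    (hln : lr ≤ nr) (hl1 : 1 ≤ lr) (hn2 : 2 ≤ nr)
    (hm : m = A * Q / N) :
    (A * s2 + B * (Q^2 - s2)) - N * m^2 ≤ A * s2 := by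
  have hBN : B * N ≤ A * A := by
    have key : (lr - 1) * N ≤ (nr - 1) * A := by
      have h1 : ((lr - 1) * N) * lr ≤ ((nr - 1) * A) * lr := by
        nlinarith [hNA, hA0.le]
      exact le_of_mul_le_mul_right h1 (by linarith)
    have h2 : (B * N) * (nr - 1) ≤ (A * A) * (nr - 1) := by
      nlinarith [hAB, hA0.le, hN0.le]
    exact le_of_mul_le_mul_right h2 (by linarith)
  have h1 : N * m^2 = A * A * Q^2 / N := by
    rw [hm]; field_simp
  have h2 : B * Q^2 ≤ A * A * Q^2 / N := by
    rw [le_div_iff₀ hN0]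
    nlinarith [sq_nonneg Q]
  nlinarith [mul_nonneg hB0 hs20]


open scoped Classical

set_option maxHeartbeats 1000000 in
/-- Lemma 6.5 (lem_od) with explicit constants: if `⟨p, Δ⟩ ≥ ε` with `0 ≤ Δ i ≤ 2`,
`‖p‖₂² ≤ u` and `l ≥ 1600·u·n/ε²`, then with probability at least `0.9` over the
uniformly random `l`-element subset `U` of `Fin n`, the conditional average
`(∑_{i∈U} p i · Δ i)/(∑_{i∈U} p i)` is at least `ε/3`. -/
theorem conditional_inner_product_bound (n l : ℕ) (hn : 1 ≤ n) (hl1 : 1 ≤ l) (hln : l ≤ n)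
    (p : Fin n → ℝ) (hp0 : ∀ i, 0 ≤ p i) (hp1 : ∑ i, p i = 1)
    (Δ : Fin n → ℝ) (hΔ0 : ∀ i, 0 ≤ Δ i) (hΔ2 : ∀ i, Δ i ≤ 2)
    (u ε : ℝ) (hu : ∑ i, (p i) ^ 2 ≤ u) (hε0 : 0 < ε) (hε2 : ε ≤ 2)
    (hinner : ε ≤ ∑ i, p i * Δ i) (hl : (1600 : ℝ) * u * n / ε ^ 2 ≤ (l : ℝ)) :
    (0.9 : ℝ) ≤
      (((Finset.powersetCard l (Finset.univ : Finset (Fin n))).filter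
          (fun U => 0 < ∑ i ∈ U, p i ∧
            ε / 3 ≤ (∑ i ∈ U, p i * Δ i) / (∑ i ∈ U, p i))).card : ℝ) /
        (Nat.choose n l : ℝ) := by
  have hn0R : (0 : ℝ) < n := by exact_mod_cast hn
  have hCS : (1 : ℝ) ≤ n * ∑ i, (p i) ^ 2 := by
    have := sq_sum_le_card_mul_sum_sq (s := (Finset.univ : Finset (Fin n))) (f := p)
    simpa [hp1, Finset.card_univ] using this
  have hu0 : 0 < u := by nlinarith
  have hun1 : (1 : ℝ) ≤ u * n := by nlinarith
  have hlε : 1600 * u * n ≤ (l : ℝ) * ε ^ 2 := by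
    have h := (div_le_iff₀ (by positivity : (0:ℝ) < ε ^ 2)).mp hl
    linarith
  have hl400 : (400 : ℝ) ≤ (l : ℝ) := by nlinarith [sq_nonneg ε, mul_pos hε0 hε0]
  have hl2 : 2 ≤ l := by exact_mod_cast le_trans (by norm_num : (2:ℝ) ≤ 400) hl400
  have hn2 : 2 ≤ n := le_trans hl2 hln
  set q : Fin n → ℝ := fun i => p i * (Δ i - ε / 3) with hq_def
  set P := Finset.powersetCard l (Finset.univ : Finset (Fin n)) with hPdef
  set A : ℝ := ((n-1).choose (l-1) : ℝ) with hAdef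
  set B : ℝ := ((n-2).choose (l-2) : ℝ) with hBdef
  set N : ℝ := (n.choose l : ℝ) with hNdef
  -- sums of q
  have hq_split : ∀ U : Finset (Fin n),
      ∑ i ∈ U, q i = (∑ i ∈ U, p i * Δ i) - ε / 3 * ∑ i ∈ U, p i := by
    intro U
    rw [Finset.mul_sum, ← Finset.sum_sub_distrib]
    exact Finset.sum_congr rfl fun i _ => by simp only [hq_def]; ring
  set Q : ℝ := ∑ i, q i with hQdef
  set s2 : ℝ := ∑ i, (q i)^2 with hs2def
  have hQ : 2 * ε / 3 ≤ Q := by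
    have := hq_split Finset.univ
    rw [hQdef, this, hp1]
    linarith
  have hQ0 : 0 < Q := by linarith
  have hs2u : s2 ≤ 4 * u := by
    have h1 : ∀ i, (q i)^2 ≤ 4 * (p i)^2 := by
      intro i
      have h0 := hp0 i; have h2 := hΔ0 i; have h3 := hΔ2 i
      have ht : (Δ i - ε/3)^2 ≤ 4 := by nlinarith
      calc (q i)^2 = (p i)^2 * (Δ i - ε/3)^2 := by simp only [hq_def]; ring
        _ ≤ (p i)^2 * 4 := mul_le_mul_of_nonneg_left ht (sq_nonneg _)
        _ = 4 * (p i)^2 := by ring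
    calc s2 ≤ ∑ i, 4 * (p i)^2 := Finset.sum_le_sum fun i _ => h1 i
      _ = 4 * ∑ i, (p i)^2 := by rw [Finset.mul_sum]
      _ ≤ 4 * u := by linarith
  have hs20 : 0 ≤ s2 := Finset.sum_nonneg fun i _ => sq_nonneg _
  -- positivity of counts
  have hN0 : 0 < N := by
    rw [hNdef]; exact_mod_cast Nat.choose_pos hln
  have hA0 : 0 < A := by
    rw [hAdef]; exact_mod_cast Nat.choose_pos (by omega : l - 1 ≤ n - 1)
  have hB0 : (0:ℝ) ≤ B := by positivity
  -- choose identities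
  have hNA : (n : ℝ) * A = N * l := by
    have h : n * ((n-1).choose (l-1)) = n.choose l * l := by
      obtain ⟨m, rfl⟩ : ∃ m, n = m + 1 := ⟨n - 1, by omega⟩
      obtain ⟨k, rfl⟩ : ∃ k, l = k + 1 := ⟨l - 1, by omega⟩
      simpa using Nat.add_one_mul_choose_eq m k
    rw [hAdef, hNdef]
    exact_mod_cast h
  have hAB : ((n : ℝ) - 1) * B = A * ((l : ℝ) - 1) := by
    have h : (n-1) * ((n-2).choose (l-2)) = (n-1).choose (l-1) * (l-1) := by
      have := Nat.add_one_mul_choose_eq (n-2) (l-2)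
      rw [show n - 2 + 1 = n - 1 by omega, show l - 2 + 1 = l - 1 by omega] at this
      exact this
    have h1 : ((n:ℝ) - 1) = ((n - 1 : ℕ) : ℝ) := by
      rw [Nat.cast_sub (by omega)]; norm_num
    have h2 : ((l:ℝ) - 1) = ((l - 1 : ℕ) : ℝ) := by
      rw [Nat.cast_sub (by omega)]; norm_num
    rw [h1, h2, hAdef, hBdef]
    exact_mod_cast h
  -- expectation and Chebyshev
  set m : ℝ := A * Q / N with hmdef
  have hm0 : 0 < m := by positivity
  have hmN : m * N = A * Q := by rw [hmdef]; field_simp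
  have hPcard : (P.card : ℝ) = N := by
    rw [hPdef, Finset.card_powersetCard, card_univ, Fintype.card_fin, hNdef]
  have hS1 : ∑ U ∈ P, ∑ i ∈ U, q i = A * Q := first_moment n l (by omega) q
  have hS2 : ∑ U ∈ P, (∑ i ∈ U, q i)^2 = A * s2 + B * (Q^2 - s2) :=
    second_moment n l hl2 q
  set bad := P.filter (fun U => ¬ 0 < ∑ i ∈ U, q i) with hbaddef
  have hcheb : (bad.card : ℝ) * m^2 ≤ ∑ U ∈ P, (∑ i ∈ U, q i - m)^2 := by
    calc (bad.card : ℝ) * m^2 = ∑ _U ∈ bad, m^2 := by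
          rw [Finset.sum_const, nsmul_eq_mul]
      _ ≤ ∑ U ∈ bad, (∑ i ∈ U, q i - m)^2 := by
          refine Finset.sum_le_sum fun U hU => ?_
          have hZ : ¬ 0 < ∑ i ∈ U, q i := (Finset.mem_filter.mp hU).2
          push_neg at hZ
          have hP2 : (0:ℝ) ≤ (-(∑ i ∈ U, q i)) * (2*m - ∑ i ∈ U, q i) :=
            mul_nonneg (neg_nonneg.mpr hZ) (by linarith)
          nlinarith [hP2]
      _ ≤ ∑ U ∈ P, (∑ i ∈ U, q i - m)^2 :=
          Finset.sum_le_sum_of_subset_of_nonneg (Finset.filter_subset _ _)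
            (fun U _ _ => sq_nonneg _)
  have hvar : ∑ U ∈ P, (∑ i ∈ U, q i - m)^2
      = (A * s2 + B * (Q^2 - s2)) - N * m^2 := by
    have expand : ∑ U ∈ P, (∑ i ∈ U, q i - m)^2
        = ∑ U ∈ P, ((∑ i ∈ U, q i)^2 - 2 * m * (∑ i ∈ U, q i) + m^2) :=
      Finset.sum_congr rfl fun U _ => by ring
    rw [expand]
    rw [Finset.sum_add_distrib, Finset.sum_sub_distrib, Finset.sum_const, nsmul_eq_mul,
      ← Finset.mul_sum, hS1, hS2, hPcard]
    have : 2 * m * (A * Q) = 2 * N * m^2 := by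
      rw [← hmN]; ring
    linarith [this]
  have hln' : (l : ℝ) ≤ n := by exact_mod_cast hln
  have hl1' : (1 : ℝ) ≤ l := by exact_mod_cast hl1
  have hn2' : (2 : ℝ) ≤ n := by exact_mod_cast hn2
  have hvar_le : (A * s2 + B * (Q^2 - s2)) - N * m^2 ≤ A * s2 :=
    var_arith A B N Q s2 (l:ℝ) (n:ℝ) m hA0 hB0 hN0 hs20 hNA hAB hln' hl1' hn2' hmdef
  have hbadN : (bad.card : ℝ) ≤ 9 / 1600 * N := by
    have hb0 : (0:ℝ) ≤ (bad.card : ℝ) := Nat.cast_nonneg _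
    have hX : (bad.card : ℝ) * m^2 ≤ A * s2 := by
      rw [hvar] at hcheb
      linarith [hvar_le, hcheb]
    exact cheb_arith A N Q s2 u ε (l:ℝ) (n:ℝ) (bad.card : ℝ) hA0 hN0 hb0 hQ hε0 hs2u hu0
      hNA hn0R (by linarith) hlε (by rw [← hmdef]; exact hX)
  -- relate good set to bad set
  set good := P.filter (fun U => 0 < ∑ i ∈ U, p i ∧
      ε / 3 ≤ (∑ i ∈ U, p i * Δ i) / (∑ i ∈ U, p i)) with hgooddef
  have hsubset : P.filter (fun U => 0 < ∑ i ∈ U, q i) ⊆ good := by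
    intro U hU
    rw [Finset.mem_filter] at hU ⊢
    obtain ⟨hUP, hZ⟩ := hU
    have hUuniv : U ⊆ Finset.univ := Finset.mem_powersetCard.mp (by rwa [hPdef] at hUP) |>.1
    have hsplit := hq_split U
    have hple : ∑ i ∈ U, q i ≤ 2 * ∑ i ∈ U, p i := by
      rw [Finset.mul_sum]
      refine Finset.sum_le_sum fun i _ => ?_
      have h1 := hp0 i; have h2 := hΔ2 i
      calc q i = p i * (Δ i - ε/3) := by simp only [hq_def]
        _ ≤ p i * 2 := mul_le_mul_of_nonneg_left (by linarith) h1
        _ = 2 * p i := by ring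
    have hpU : 0 < ∑ i ∈ U, p i := by linarith
    refine ⟨hUP, hpU, ?_⟩
    rw [le_div_iff₀ hpU]
    rw [hsplit] at hZ
    linarith
  have hcardsplit : (P.filter (fun U => 0 < ∑ i ∈ U, q i)).card + bad.card = P.card :=
    Finset.card_filter_add_card_filter_not _
  have h1 : ((P.filter (fun U => 0 < ∑ i ∈ U, q i)).card : ℝ) ≤ (good.card : ℝ) :=
    Nat.cast_le.mpr (Finset.card_le_card hsubset)
  have h2 : ((P.filter (fun U => 0 < ∑ i ∈ U, q i)).card : ℝ) + (bad.card : ℝ)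
      = (P.card : ℝ) := by exact_mod_cast hcardsplit
  rw [le_div_iff₀ hN0]
  linarith
end

section
/- Let n ≥ 2, let x : Fin n → Bool, and let M : Fin n → Fin n satisfy M (M i) = i, M i ≠ i, and x (M i) ≠ x i for all i (the b = 1 case of Boolean Hidden Hypermatching). Then for all j, k : Fin n, P x M (j,k) = 1/n²; that is, the joint distribution of the reduction's sample pair (A, B) is exactly the uniform product distribution on Fin n × Fin n. -/
/-!
Bob's two candidates `k` and `M k` are the only indices `r` that can produce `B = k`, and since
`x (M k) = !x k`, exactly one of them lies in Alice's class `{i | x i = x j}`. So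
`P (j, k) = 1 / (2 n |S|)` with `S` that class, and `M` swaps `S` with its complement, whence
`|S| = n / 2`.
-/

/-- Joint law of the pair `(A, B)` in the BHH reduction of Theorem 7.1: a shared index
`r` is uniform on `Fin n`, Alice samples `A` uniformly from `{i | x i = x r}`, and Bob
samples `B` uniformly from `{r, M r}`. -/
noncomputable def redP {n : ℕ} (x : Fin n → Bool) (M : Fin n → Fin n)
    (jk : Fin n × Fin n) : ℝ :=
  ∑ r : Fin n,
    (1 / (n : ℝ)) *
      (if x r = x jk.1 then
        ((Finset.univ.filter fun i : Fin n => x i = x jk.1).card : ℝ)⁻¹ else 0) *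
      (1 / 2) *
      ((if jk.2 = r then (1 : ℝ) else 0) + (if jk.2 = M r then (1 : ℝ) else 0))

open Finset Function

namespace Function.Involutive

variable {α : Type*} [Fintype α] {σ : α → α}

theorem card_filter_eq_card_filter_not (hσ : Involutive σ) {p : α → Prop} [DecidablePred p]
    (hp : ∀ i, p (σ i) ↔ ¬ p i) : #{i | p i} = #{i | ¬ p i} :=
  card_nbij' σ σ (fun i hi => by simp_all) (fun i hi => by simp_all)
    (fun i _ => hσ i) (fun i _ => hσ i)

theorem two_mul_card_filter (hσ : Involutive σ) {p : α → Prop} [DecidablePred p]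
    (hp : ∀ i, p (σ i) ↔ ¬ p i) : 2 * #{i | p i} = Fintype.card α := by
  rw [two_mul]
  nth_rw 2 [hσ.card_filter_eq_card_filter_not hp]
  rw [card_filter_add_card_filter_not, card_univ]

theorem sum_mul_ite_add_ite {R : Type*} [DecidableEq α] [NonAssocSemiring R]
    (hσ : Involutive σ) (g : α → R) (k : α) :
    ∑ r, g r * ((if k = r then 1 else 0) + (if k = σ r then 1 else 0)) = g k + g (σ k) := by
  simp only [eq_comm (a := k), hσ.eq_iff, mul_add, sum_add_distrib, mul_ite, mul_one, mul_zero,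
    sum_ite_eq', mem_univ, if_true]

end Function.Involutive

theorem Bool.ite_eq_add_ite_not_eq {R : Type*} [AddZeroClass R] (a c : Bool) (t : R) :
    ((if a = c then t else 0) + if (!a) = c then t else 0) = t := by
  cases a <;> cases c <;> simp

theorem redP_uniform_of_bhh_one_general (n : ℕ) (x : Fin n → Bool)
    (M : Fin n → Fin n) (hM : ∀ i, M (M i) = i)
    (hx : ∀ i, x (M i) ≠ x i) :
    ∀ j k : Fin n, redP x M (j, k) = 1 / (n : ℝ) ^ 2 := by
  intro j k
  have hM : Involutive M := hM
  have hxM (i : Fin n) : x (M i) = !x i := Bool.eq_not_iff.2 (hx i)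
  set S : ℝ := ↑(#{i | x i = x j})
  have hS : 2 * S = n := by
    have := hM.two_mul_card_filter (p := fun i => x i = x j) fun i => by
      rw [hxM, Bool.not_eq_iff]
    rw [Fintype.card_fin] at this
    simp only [S]
    exact_mod_cast this
  have hS0 : S ≠ 0 := Nat.cast_ne_zero.2 (card_ne_zero_of_mem (a := j) (by simp))
  unfold redP
  calc _ = 1 / n * ((if x k = x j then S⁻¹ else 0) + if x (M k) = x j then S⁻¹ else 0)
          * (1 / 2) := (hM.sum_mul_ite_add_ite _ k).trans (by ring)
    _ = 1 / n ^ 2 := by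
      rw [hxM, Bool.ite_eq_add_ite_not_eq, ← hS]
      field_simp

/-- In the `b = 1` case of Boolean Hidden Hypermatching (`x (M i) ≠ x i` everywhere),
the reduction's sample pair `(A, B)` is distributed exactly as the uniform product
distribution on `Fin n × Fin n`: `P x M (j,k) = 1/n²` for all `j, k`. -/
theorem redP_uniform_of_bhh_one (n : ℕ) (hn : 2 ≤ n) (x : Fin n → Bool)
    (M : Fin n → Fin n) (hM : ∀ i, M (M i) = i) (hMne : ∀ i, M i ≠ i)
    (hx : ∀ i, x (M i) ≠ x i) :
    ∀ j k : Fin n, redP x M (j, k) = 1 / (n : ℝ) ^ 2 :=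
  redP_uniform_of_bhh_one_general n x M hM hx
end

section
/- Let n ≥ 2, let x : Fin n → Bool with card {i | x i = false} = card {i | x i = true}, and let M : Fin n → Fin n satisfy M (M i) = i, M i ≠ i, and x (M i) = x i for all i (the b = 0 case of Boolean Hidden Hypermatching, with balanced x). Then for all j, k : Fin n, P x M (j,k) = 2/n² if x j = x k and P x M (j,k) = 0 otherwise; consequently, ∑_{j,k} | P x M (j,k) − 1/n² | = 1, i.e. the joint distribution of the reduction's sample pair (A, B) is at ℓ1 distance exactly 1 from the uniform product distribution on Fin n × Fin n. -/
open Finset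

theorem redP_apply {n : ℕ} (x : Fin n → Bool) {M : Fin n → Fin n}
    (hM : Function.Involutive M) (j k : Fin n) :
    redP x M (j, k) = 1 / n * (#{i | x i = x j} : ℝ)⁻¹ * (1 / 2) *
      ((if x j = x k then 1 else 0) + (if x j = x (M k) then 1 else 0)) := by
  have hMr (r : Fin n) : k = M r ↔ r = M k := eq_comm.trans hM.eq_iff
  simp [redP, mul_add, sum_add_distrib, hMr, eq_comm (a := x j)]

theorem redP_apply_of_invariant {n : ℕ} (x : Fin n → Bool) {M : Fin n → Fin n}
    (hM : Function.Involutive M) (hx : ∀ i, x (M i) = x i) (j k : Fin n) :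
    redP x M (j, k) = if x j = x k then (n * #{i | x i = x j} : ℝ)⁻¹ else 0 := by
  rw [redP_apply x hM, hx]
  split_ifs <;> ring

theorem two_mul_card_filter_eq_of_balanced {α : Type*} [Fintype α] {x : α → Bool}
    (hbal : #{i | x i = false} = #{i | x i = true}) (b : Bool) :
    2 * #{i | x i = b} = Fintype.card α := by
  have h := card_filter_add_card_filter_not (s := univ) (fun i : α => x i = false)
  simp only [Bool.not_eq_false, card_univ] at h
  cases b <;> omega

theorem redP_far_of_bhh_zero_general (n : ℕ) (hn : 2 ≤ n) (x : Fin n → Bool)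
    (hbal : (Finset.univ.filter fun i : Fin n => x i = false).card =
      (Finset.univ.filter fun i : Fin n => x i = true).card)
    (M : Fin n → Fin n) (hM : ∀ i, M (M i) = i)
    (hx : ∀ i, x (M i) = x i) :
    (∀ j k : Fin n,
      redP x M (j, k) = if x j = x k then 2 / (n : ℝ) ^ 2 else 0) ∧
    ∑ j : Fin n, ∑ k : Fin n, |redP x M (j, k) - 1 / (n : ℝ) ^ 2| = 1 := by
  have hn₀ : (n : ℝ) ≠ 0 := by positivity
  have hcard (j : Fin n) : (#{i | x i = x j} : ℝ) = n / 2 := by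
    have := two_mul_card_filter_eq_of_balanced hbal (x j)
    rw [Fintype.card_fin] at this
    rw [eq_div_iff two_ne_zero, mul_comm]
    exact_mod_cast this
  have hP (j k : Fin n) : redP x M (j, k) = if x j = x k then 2 / (n : ℝ) ^ 2 else 0 := by
    rw [redP_apply_of_invariant x hM hx, hcard]
    field_simp
  refine ⟨hP, ?_⟩
  have hdist (j k : Fin n) : |redP x M (j, k) - 1 / (n : ℝ) ^ 2| = 1 / (n : ℝ) ^ 2 := by
    rw [hP]
    split_ifs
    · rw [← sub_div]; norm_num
    · simp
  simp only [hdist, sum_const, card_univ, Fintype.card_fin, nsmul_eq_mul]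
  field_simp

/-- In the `b = 0` case of Boolean Hidden Hypermatching with balanced `x`
(`x (M i) = x i` everywhere and `|{x = false}| = |{x = true}|`), the reduction's
sample pair satisfies `P x M (j,k) = 2/n²` when `x j = x k` and `0` otherwise,
hence is at ℓ1 distance exactly `1` from the uniform product distribution. -/
theorem redP_far_of_bhh_zero (n : ℕ) (hn : 2 ≤ n) (x : Fin n → Bool)
    (hbal : (Finset.univ.filter fun i : Fin n => x i = false).card =
      (Finset.univ.filter fun i : Fin n => x i = true).card)
    (M : Fin n → Fin n) (hM : ∀ i, M (M i) = i) (hMne : ∀ i, M i ≠ i)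
    (hx : ∀ i, x (M i) = x i) :
    (∀ j k : Fin n,
      redP x M (j, k) = if x j = x k then 2 / (n : ℝ) ^ 2 else 0) ∧
    ∑ j : Fin n, ∑ k : Fin n, |redP x M (j, k) - 1 / (n : ℝ) ^ 2| = 1 :=
  redP_far_of_bhh_zero_general n hn x hbal M hM hx
end

section
/- Let n ≥ 1, let x : Fin n → Bool, and let M : Fin n → Fin n satisfy M (M i) = i and M i ≠ i for all i. Then both marginals of the reduction distribution are uniform: for every j : Fin n, ∑_k P x M (j,k) = 1/n, and for every k : Fin n, ∑_j P x M (j,k) = 1/n. -/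
/-- Both marginals of the BHH reduction distribution are uniform:
`∑ k, P x M (j,k) = 1/n` for every `j`, and `∑ j, P x M (j,k) = 1/n` for every `k`. -/
theorem redP_marginals_uniform (n : ℕ) (hn : 1 ≤ n) (x : Fin n → Bool)
    (M : Fin n → Fin n) (hM : ∀ i, M (M i) = i) (hMne : ∀ i, M i ≠ i) :
    (∀ j : Fin n, ∑ k : Fin n, redP x M (j, k) = 1 / (n : ℝ)) ∧
    (∀ k : Fin n, ∑ j : Fin n, redP x M (j, k) = 1 / (n : ℝ)) := by
  have hcard : ∀ j : Fin n,
      ((Finset.univ.filter fun i : Fin n => x i = x j).card : ℝ) ≠ 0 := by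
    intro j
    have : j ∈ Finset.univ.filter fun i : Fin n => x i = x j := by simp
    have h := Finset.card_pos.mpr ⟨j, this⟩
    exact_mod_cast h.ne'
  constructor
  · intro j
    have h1 : ∀ r : Fin n, ∑ k : Fin n,
        (1 / (n : ℝ)) *
          (if x r = x j then
            ((Finset.univ.filter fun i : Fin n => x i = x j).card : ℝ)⁻¹ else 0) *
          (1 / 2) *
          ((if k = r then (1 : ℝ) else 0) + (if k = M r then (1 : ℝ) else 0)) =
        (1 / (n : ℝ)) *
          (if x r = x j then
            ((Finset.univ.filter fun i : Fin n => x i = x j).card : ℝ)⁻¹ else 0) := by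
      intro r
      rw [← Finset.mul_sum, Finset.sum_add_distrib]
      simp [mul_assoc]
      ring
    simp only [redP]
    rw [Finset.sum_comm]
    calc ∑ r : Fin n, ∑ k : Fin n,
        (1 / (n : ℝ)) *
          (if x r = x j then
            ((Finset.univ.filter fun i : Fin n => x i = x j).card : ℝ)⁻¹ else 0) *
          (1 / 2) *
          ((if k = r then (1 : ℝ) else 0) + (if k = M r then (1 : ℝ) else 0))
        = ∑ r : Fin n, (1 / (n : ℝ)) *
          (if x r = x j then
            ((Finset.univ.filter fun i : Fin n => x i = x j).card : ℝ)⁻¹ else 0) := by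
          exact Finset.sum_congr rfl fun r _ => h1 r
      _ = (1 / (n : ℝ)) * ∑ r : Fin n,
          (if x r = x j then
            ((Finset.univ.filter fun i : Fin n => x i = x j).card : ℝ)⁻¹ else 0) := by
          rw [Finset.mul_sum]
      _ = 1 / (n : ℝ) := by
          rw [← Finset.sum_filter, Finset.sum_const, nsmul_eq_mul,
            mul_inv_cancel₀ (hcard j), mul_one]
  · intro k
    simp only [redP]
    rw [Finset.sum_comm]
    have h2 : ∀ r : Fin n, ∑ j : Fin n,
        (1 / (n : ℝ)) *
          (if x r = x j then
            ((Finset.univ.filter fun i : Fin n => x i = x j).card : ℝ)⁻¹ else 0) *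
          (1 / 2) *
          ((if k = r then (1 : ℝ) else 0) + (if k = M r then (1 : ℝ) else 0)) =
        (1 / (n : ℝ)) * (1 / 2) *
          ((if k = r then (1 : ℝ) else 0) + (if k = M r then (1 : ℝ) else 0)) := by
      intro r
      have hsum : ∑ j : Fin n,
          (if x r = x j then
            ((Finset.univ.filter fun i : Fin n => x i = x j).card : ℝ)⁻¹ else 0) = 1 := by
        have heq : ∀ j : Fin n,
            (if x r = x j then
              ((Finset.univ.filter fun i : Fin n => x i = x j).card : ℝ)⁻¹ else 0) =
            (if x j = x r then
              ((Finset.univ.filter fun i : Fin n => x i = x r).card : ℝ)⁻¹ else 0) := by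
          intro j
          by_cases h : x j = x r
          · simp [h, eq_comm]
          · rw [if_neg (fun hh => h hh.symm), if_neg h]
        rw [Finset.sum_congr rfl fun j _ => heq j, ← Finset.sum_filter,
          Finset.sum_const, nsmul_eq_mul, mul_inv_cancel₀ (hcard r)]
      calc ∑ j : Fin n,
          (1 / (n : ℝ)) *
            (if x r = x j then
              ((Finset.univ.filter fun i : Fin n => x i = x j).card : ℝ)⁻¹ else 0) *
            (1 / 2) *
            ((if k = r then (1 : ℝ) else 0) + (if k = M r then (1 : ℝ) else 0))
          = (1 / (n : ℝ)) * (1 / 2) *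
            ((if k = r then (1 : ℝ) else 0) + (if k = M r then (1 : ℝ) else 0)) *
            ∑ j : Fin n,
            (if x r = x j then
              ((Finset.univ.filter fun i : Fin n => x i = x j).card : ℝ)⁻¹ else 0) := by
            rw [Finset.mul_sum]
            exact Finset.sum_congr rfl fun j _ => by ring
        _ = _ := by rw [hsum, mul_one]
    rw [Finset.sum_congr rfl fun r _ => h2 r]
    have hMkey : ∑ r : Fin n, (if k = M r then (1 : ℝ) else 0) = 1 := by
      have : ∀ r : Fin n, (if k = M r then (1 : ℝ) else 0) =
          (if r = M k then (1 : ℝ) else 0) := by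
        intro r
        by_cases h : r = M k
        · subst h; simp [hM]
        · have : k ≠ M r := fun hh => h (by rw [hh, hM])
          simp [h, this]
      rw [Finset.sum_congr rfl fun r _ => this r]
      simp
    have hkey : ∑ r : Fin n, (if k = r then (1 : ℝ) else 0) = 1 := by simp
    rw [← Finset.mul_sum, Finset.sum_add_distrib, hMkey, hkey]
    ring
end
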